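/- arXiv:1212.2702 — 4 statements merged into one kernel-verified Lean document; each statement's English description precedes it below -/
import Mathlib

section
/- If A is a d-th order n-dimensional real tensor such that the 2d-th order tensor A⊗A (outer product of A with itself) is super-symmetric, then A itself is super-symmetric. -/
/-- A tensor indexed by `ι → n` is super-symmetric if its entries are invariant
under any permutation of the index positions. -/
def SuperSym {ι n : Type*} (A : (ι → n) → ℝ) : Prop :=
  ∀ (σ : Equiv.Perm ι) (i : ι → n), A (i ∘ σ) = A i

theorem SuperSym.of_mul_outer_self {ι n : Type*} {A : (ι → n) → ℝ}
    (h : SuperSym fun i : ι ⊕ ι → n => A (i ∘ Sum.inl) * A (i ∘ Sum.inr)) :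
    SuperSym A := by
  intro σ i
  obtain hA | ⟨j, hj⟩ := forall_or_exists_not fun j => A j = 0
  · simp only [hA]
  -- Permute the first block of indices only, with the second block frozen at `j`, then cancel `A j`.
  exact mul_right_cancel₀ hj (h (σ.sumCongr (Equiv.refl ι)) (Sum.elim i j))

/-- If `A ⊗ A` (a 2d-th order tensor) is super-symmetric, then `A` is super-symmetric. -/
theorem stmt0 {d n : ℕ} (A : (Fin d → Fin n) → ℝ)
    (h : SuperSym (fun i : Fin d ⊕ Fin d → Fin n => A (i ∘ Sum.inl) * A (i ∘ Sum.inr))) :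
    SuperSym A :=
  SuperSym.of_mul_outer_self h
end

section
/- If A is a d-th order n-dimensional real tensor such that A⊗A is super-symmetric, then the mode-1 unfolding matrix A(1) of A has rank one; equivalently, every 2×2 minor of A(1) vanishes. -/
theorem SuperSym.mul_update_swap {ι n : Type*} [DecidableEq ι] {A : (ι → n) → ℝ}
    (h : SuperSym fun i : ι ⊕ ι → n => A (i ∘ Sum.inl) * A (i ∘ Sum.inr))
    (a : ι) (i j : ι → n) :
    A (Function.update i a (j a)) * A (Function.update j a (i a)) = A i * A j := by
  have hswap := h (Equiv.swap (Sum.inl a) (Sum.inr a)) (Sum.elim i j)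
  have hl : Sum.elim i j ∘ Equiv.swap (Sum.inl a) (Sum.inr a) ∘ Sum.inl =
      Function.update i a (j a) := by
    funext b
    by_cases hb : b = a
    · subst hb; simp
    · simp [Equiv.swap_apply_of_ne_of_ne, hb]
  have hr : Sum.elim i j ∘ Equiv.swap (Sum.inl a) (Sum.inr a) ∘ Sum.inr =
      Function.update j a (i a) := by
    funext b
    by_cases hb : b = a
    · subst hb; simp
    · simp [Equiv.swap_apply_of_ne_of_ne, hb]
  simpa only [Function.comp_assoc, hl, hr, Sum.elim_comp_inl, Sum.elim_comp_inr] using hswap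

theorem Matrix.exists_eq_vecMulVec_of_mul_eq_mul {m o K : Type*} [Field K] {M : Matrix m o K}
    (hM : ∀ r r' c c', M r c * M r' c' = M r' c * M r c') :
    ∃ (u : m → K) (v : o → K), M = vecMulVec u v := by
  by_cases hzero : ∀ r c, M r c = 0
  · exact ⟨0, 0, by ext r c; simp [hzero]⟩
  push Not at hzero
  obtain ⟨r₀, c₀, hne⟩ := hzero
  refine ⟨fun r => M r c₀ / M r₀ c₀, M r₀, ?_⟩
  ext r c
  rw [vecMulVec_apply, div_mul_eq_mul_div, eq_div_iff hne, hM r r₀ c₀ c, mul_comm]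

theorem Matrix.rank_le_one_of_mul_eq_mul {m o K : Type*} [Fintype o] [Field K]
    {M : Matrix m o K} (hM : ∀ r r' c c', M r c * M r' c' = M r' c * M r c') :
    M.rank ≤ 1 := by
  obtain ⟨u, v, rfl⟩ := exists_eq_vecMulVec_of_mul_eq_mul hM
  exact rank_vecMulVec_le u v

/-- If `A ⊗ A` is super-symmetric, then the mode-1 unfolding matrix of `A`
(rows indexed by the first index, columns by the remaining indices) has rank at most one;
equivalently, every 2×2 minor of it vanishes. -/
theorem stmt1 {d n : ℕ} (A : (Fin (d + 1) → Fin n) → ℝ)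
    (h : SuperSym (fun i : Fin (d + 1) ⊕ Fin (d + 1) → Fin n =>
        A (i ∘ Sum.inl) * A (i ∘ Sum.inr)))
    (M : Matrix (Fin n) (Fin d → Fin n) ℝ)
    (hM : M = Matrix.of fun r c => A (Fin.cons r c)) :
    (∀ (r r' : Fin n) (c c' : Fin d → Fin n), M r c * M r' c' = M r' c * M r c')
    ∧ M.rank ≤ 1 := by
  have minors : ∀ (r r' : Fin n) (c c' : Fin d → Fin n),
      M r c * M r' c' = M r' c * M r c' := by
    intro r r' c c'
    have hswap := h.mul_update_swap 0 (Fin.cons r c) (Fin.cons r' c')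
    simp only [Fin.cons_zero, Fin.update_cons_zero] at hswap
    simpa [hM] using hswap.symm
  exact ⟨minors, Matrix.rank_le_one_of_mul_eq_mul minors⟩
end

section
/- Let ρ > 0, let F = matr(F_tensor) for a super-symmetric 2d-th order tensor F_tensor, let X*_PNP(ρ) be an optimal solution of max{tr(FX) − ρ‖X‖_* : tr(X)=1, matr^{-1}(X) super-symmetric, X symmetric}, let v be the optimal value of max{tr(FX) : ‖X‖_* = 1, X symmetric and matr^{-1}(X) super-symmetric}, and let F_0 = max_i F_{i…i}. If Eig^-(X) denotes the sum of negative eigenvalues of X, then 2(ρ − v)·|Eig^-(X*_PNP(ρ))| ≤ v − F_0. -/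
/-- The 2d-th order tensor `matr⁻¹(X)` corresponding to a matrix `X` indexed by
`(Fin d → Fin n)`. -/
def matrInv {d n : ℕ} (X : Matrix (Fin d → Fin n) (Fin d → Fin n) ℝ) :
    (Fin d ⊕ Fin d → Fin n) → ℝ :=
  fun i => X (i ∘ Sum.inl) (i ∘ Sum.inr)

open Classical in
/-- Nuclear norm of a real symmetric matrix: sum of absolute values of its eigenvalues
(junk value 0 for non-Hermitian matrices). -/
noncomputable def nuclearNorm {I : Type*} [Fintype I] [DecidableEq I]
    (X : Matrix I I ℝ) : ℝ :=
  if h : X.IsHermitian then ∑ i, |h.eigenvalues i| else 0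

open Classical in
/-- `Eig^-(X)`: the sum of the negative eigenvalues of a real symmetric matrix. -/
noncomputable def negEigSum {I : Type*} [Fintype I] [DecidableEq I]
    (X : Matrix I I ℝ) : ℝ :=
  if h : X.IsHermitian then
    ∑ i ∈ Finset.univ.filter (fun i => h.eigenvalues i < 0), h.eigenvalues i
  else 0

/-!
The rank-one matrix `e_c e_cᵀ`, with `c` the constant multi-index `(i, …, i)`, is feasible for the
penalty problem with value `F_{i⋯i} - ρ`, so `F₀ - ρ ≤ tr(F Xρ) - ρ‖Xρ‖_*`. Rescaling `Xρ` to unit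
nuclear norm gives `tr(F Xρ) ≤ v‖Xρ‖_*`. Since `tr Xρ = 1`, `‖Xρ‖_* = 1 - 2 Eig^-(Xρ)`, and adding
the two inequalities is exactly the claim.
-/

namespace Matrix
open Polynomial

variable {I : Type*} [Fintype I] [DecidableEq I]

lemma IsHermitian.charpoly_smul {A : Matrix I I ℝ} (hA : A.IsHermitian) (c : ℝ) :
    (c • A).charpoly = ∏ i, (X - C (c * hA.eigenvalues i)) := by
  conv_lhs => rw [hA.spectral_theorem, ← map_smul, Unitary.conjStarAlgAut_apply,
    charpoly_mul_comm, ← mul_assoc]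
  simp [← diagonal_smul, charpoly_diagonal]

lemma IsHermitian.map_eigenvalues_smul {A : Matrix I I ℝ} (hA : A.IsHermitian) (c : ℝ) :
    Finset.univ.val.map (hA.smul (.all c)).eigenvalues =
      Finset.univ.val.map (c * hA.eigenvalues ·) := by
  have h := (hA.smul (.all c)).roots_charpoly_eq_eigenvalues
  rw [hA.charpoly_smul, roots_prod _ _ (Finset.prod_ne_zero_iff.2 fun i _ ↦ X_sub_C_ne_zero _)] at h
  simp only [roots_X_sub_C, Multiset.bind_singleton] at h
  simpa using h.symm

end Matrix

open Matrix

section NuclearNorm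

variable {I : Type*} [Fintype I] [DecidableEq I]

lemma nuclearNorm_smul {A : Matrix I I ℝ} (hA : A.IsHermitian) {c : ℝ} (hc : 0 ≤ c) :
    nuclearNorm (c • A) = c * nuclearNorm A := by
  rw [nuclearNorm, nuclearNorm, dif_pos hA, dif_pos (hA.smul (.all c))]
  calc ∑ i, |(hA.smul (.all c)).eigenvalues i|
      = ((Finset.univ.val.map (hA.smul (.all c)).eigenvalues).map abs).sum := by
        rw [Multiset.map_map]; rfl
    _ = ∑ i, |c * hA.eigenvalues i| := by
        rw [hA.map_eigenvalues_smul, Multiset.map_map]; rfl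
    _ = c * ∑ i, |hA.eigenvalues i| := by
        simp_rw [Finset.mul_sum, abs_mul, abs_of_nonneg hc]

lemma nuclearNorm_eq_trace_sub_two_mul_negEigSum {A : Matrix I I ℝ} (hA : A.IsHermitian) :
    nuclearNorm A = A.trace - 2 * negEigSum A := by
  rw [nuclearNorm, negEigSum, dif_pos hA, dif_pos hA, hA.trace_eq_sum_eigenvalues,
    Finset.sum_filter, Finset.mul_sum, ← Finset.sum_sub_distrib, RCLike.ofReal_real_eq_id]
  refine Finset.sum_congr rfl fun i _ ↦ ?_
  split_ifs with h
  · rw [abs_of_neg h, id]; ring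
  · rw [abs_of_nonneg (not_lt.mp h), id]; ring

lemma Matrix.PosSemidef.nuclearNorm_eq_trace {A : Matrix I I ℝ} (hA : A.PosSemidef) :
    nuclearNorm A = A.trace := by
  rw [nuclearNorm, dif_pos hA.isHermitian, hA.isHermitian.trace_eq_sum_eigenvalues]
  exact Finset.sum_congr rfl fun i _ ↦ abs_of_nonneg (hA.eigenvalues_nonneg i)

lemma nuclearNorm_single_self (c : I) : nuclearNorm (single c c (1 : ℝ)) = 1 := by
  rw [← diagonal_single, (PosSemidef.diagonal (Pi.single_nonneg.2 zero_le_one)).nuclearNorm_eq_trace,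
    trace_diagonal, Finset.sum_pi_single']
  simp

lemma negEigSum_nonpos (A : Matrix I I ℝ) : negEigSum A ≤ 0 := by
  rw [negEigSum]
  split
  · exact Finset.sum_nonpos fun i hi ↦ (Finset.mem_filter.mp hi).2.le
  · exact le_rfl

end NuclearNorm

section SuperSym

variable {d n : ℕ}

lemma SuperSym.smul {ι κ : Type*} {A : (ι → κ) → ℝ} (hA : SuperSym A) (c : ℝ) :
    SuperSym (c • A) :=
  fun σ i ↦ by simp only [Pi.smul_apply, hA σ i]

lemma matrInv_smul (c : ℝ) (X : Matrix (Fin d → Fin n) (Fin d → Fin n) ℝ) :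
    matrInv (c • X) = c • matrInv X :=
  rfl

lemma matrInv_single_const (i : Fin n) (j : Fin d ⊕ Fin d → Fin n) :
    matrInv (single (fun _ ↦ i) (fun _ ↦ i) (1 : ℝ)) j = if ∀ s, j s = i then 1 else 0 := by
  simp only [matrInv, single_apply, funext_iff, Function.comp_apply, Sum.forall]
  by_cases h1 : ∀ k, i = j (Sum.inl k) <;> by_cases h2 : ∀ k, i = j (Sum.inr k) <;>
    simp [h1, h2, eq_comm]

lemma superSym_matrInv_single_const (i : Fin n) :
    SuperSym (matrInv (single (fun _ : Fin d ↦ i) (fun _ ↦ i) (1 : ℝ))) := by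
  intro σ j
  rw [matrInv_single_const, matrInv_single_const]
  exact if_congr ⟨fun h s ↦ by simpa using h (σ.symm s), fun h s ↦ h (σ s)⟩ rfl rfl

end SuperSym

lemma trace_mul_le_mul_nuclearNorm {d n : ℕ} {F X : Matrix (Fin d → Fin n) (Fin d → Fin n) ℝ}
    {v : ℝ} (hv : v ∈ upperBounds {t | ∃ X : Matrix (Fin d → Fin n) (Fin d → Fin n) ℝ,
        X.IsSymm ∧ SuperSym (matrInv X) ∧ nuclearNorm X = 1 ∧ t = (F * X).trace})
    (hX : X.IsSymm) (hXsym : SuperSym (matrInv X)) (hpos : 0 < nuclearNorm X) :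
    (F * X).trace ≤ v * nuclearNorm X := by
  have hscaled := hv ⟨(nuclearNorm X)⁻¹ • X, hX.smul _, matrInv_smul _ X ▸ hXsym.smul _,
    by rw [nuclearNorm_smul (isHermitian_iff_isSymm.2 hX) (inv_nonneg.2 hpos.le),
      inv_mul_cancel₀ hpos.ne'], rfl⟩
  rwa [Matrix.mul_smul, trace_smul, smul_eq_mul, inv_mul_le_iff₀ hpos, mul_comm] at hscaled

theorem stmt6_general {d n : ℕ} (𝓕 : (Fin d ⊕ Fin d → Fin n) → ℝ)
    (F : Matrix (Fin d → Fin n) (Fin d → Fin n) ℝ)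
    (hF : F = Matrix.of fun a b => 𝓕 (Sum.elim a b))
    (ρ v F0 : ℝ)
    (Xρ : Matrix (Fin d → Fin n) (Fin d → Fin n) ℝ)
    (hXρfeas : Xρ.IsSymm ∧ Xρ.trace = 1 ∧ SuperSym (matrInv Xρ))
    (hXρopt : ∀ X : Matrix (Fin d → Fin n) (Fin d → Fin n) ℝ,
        X.IsSymm → X.trace = 1 → SuperSym (matrInv X) →
        (F * X).trace - ρ * nuclearNorm X ≤ (F * Xρ).trace - ρ * nuclearNorm Xρ)
    (hv : IsGreatest {t | ∃ X : Matrix (Fin d → Fin n) (Fin d → Fin n) ℝ,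
        X.IsSymm ∧ SuperSym (matrInv X) ∧ nuclearNorm X = 1 ∧ t = (F * X).trace} v)
    (hF0 : IsGreatest {t | ∃ i : Fin n, t = 𝓕 (fun _ => i)} F0) :
    2 * (ρ - v) * |negEigSum Xρ| ≤ v - F0 := by
  obtain ⟨hsymm, htrace, hsuper⟩ := hXρfeas
  obtain ⟨i, rfl⟩ := hF0.1
  have hnorm : nuclearNorm Xρ = 1 - 2 * negEigSum Xρ := by
    rw [nuclearNorm_eq_trace_sub_two_mul_negEigSum (isHermitian_iff_isSymm.2 hsymm), htrace]
  have hneg := negEigSum_nonpos Xρ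
  have hvertex := hXρopt (single (fun _ ↦ i) (fun _ ↦ i) 1)
    (diagonal_single (fun _ : Fin d ↦ i) (1 : ℝ) ▸ isSymm_diagonal _) (trace_single_eq_same _ _)
    (superSym_matrInv_single_const i)
  have hentry : F (fun _ ↦ i) (fun _ ↦ i) = 𝓕 (fun _ ↦ i) := by
    rw [hF, of_apply]
    exact congrArg 𝓕 (Sum.elim_const_const i)
  rw [nuclearNorm_single_self, trace_mul_single, MulOpposite.op_one, one_smul, hentry] at hvertex
  have hscaled := trace_mul_le_mul_nuclearNorm hv.2 hsymm hsuper (by linarith)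
  rw [hnorm] at hvertex hscaled
  rw [abs_of_nonpos hneg]
  linear_combination hvertex + hscaled

/-- Bound relating the optimal solution of the nuclear norm penalty problem, the value `v`
of the nuclear-norm-constrained problem, and `F₀ = max_i F_{i⋯i}`:
`2(ρ - v)·|Eig^-(X*_PNP(ρ))| ≤ v - F₀`. -/
theorem stmt6 {d n : ℕ} (𝓕 : (Fin d ⊕ Fin d → Fin n) → ℝ) (h𝓕 : SuperSym 𝓕)
    (F : Matrix (Fin d → Fin n) (Fin d → Fin n) ℝ)
    (hF : F = Matrix.of fun a b => 𝓕 (Sum.elim a b))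
    (ρ v F0 : ℝ) (hρ : 0 < ρ)
    (Xρ : Matrix (Fin d → Fin n) (Fin d → Fin n) ℝ)
    (hXρfeas : Xρ.IsSymm ∧ Xρ.trace = 1 ∧ SuperSym (matrInv Xρ))
    (hXρopt : ∀ X : Matrix (Fin d → Fin n) (Fin d → Fin n) ℝ,
        X.IsSymm → X.trace = 1 → SuperSym (matrInv X) →
        (F * X).trace - ρ * nuclearNorm X ≤ (F * Xρ).trace - ρ * nuclearNorm Xρ)
    (hv : IsGreatest {t | ∃ X : Matrix (Fin d → Fin n) (Fin d → Fin n) ℝ,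
        X.IsSymm ∧ SuperSym (matrInv X) ∧ nuclearNorm X = 1 ∧ t = (F * X).trace} v)
    (hF0 : IsGreatest {t | ∃ i : Fin n, t = 𝓕 (fun _ => i)} F0) :
    2 * (ρ - v) * |negEigSum Xρ| ≤ v - F0 :=
  stmt6_general 𝓕 F hF ρ v F0 Xρ hXρfeas hXρopt hv hF0
end

section
/- Let T be a 4-th order partial-symmetric tensor on ℝ^{n_1+n_3} × ℝ^{n_2+n_4} that arises (by symmetrization) from a nonnegative-valued quadrilinear form. Then the maximum of T((x¹;x³),(x²;x⁴),(x¹;x³),(x²;x⁴)) subject to ‖x^i‖=1 for i=1,…,4 equals its maximum subject to the relaxed constraints ‖x¹‖²+‖x³‖² = 2 and ‖x²‖²+‖x⁴‖² = 2, provided the optimal value is positive and the form is multilinear in (x¹,x²,x³,x⁴). -/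
/-!
If `x = (x¹, x², x³, x⁴)` attains the relaxed maximum `v > 0`, write `xⁱ = rⁱ uⁱ` with `rⁱ = ‖xⁱ‖`
and `‖uⁱ‖ = 1`. By multilinearity `v = r¹r²r³r⁴ · F(u)`, and by AM–GM
`r¹r³ ≤ (‖x¹‖² + ‖x³‖²)/2 = 1`, likewise `r²r⁴ ≤ 1`. Since `u` is itself feasible for the relaxed
problem, `v ≤ F(u) ≤ v`. Conversely the unit spheres lie inside the relaxed constraint set.
-/

open Finset

section

variable {ι ι₁ ι₂ ι₃ ι₄ : Type*} [Fintype ι] [Fintype ι₁] [Fintype ι₂] [Fintype ι₃] [Fintype ι₄]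

def quadForm (F : ι₁ → ι₂ → ι₃ → ι₄ → ℝ) (x₁ : ι₁ → ℝ) (x₂ : ι₂ → ℝ) (x₃ : ι₃ → ℝ)
    (x₄ : ι₄ → ℝ) : ℝ :=
  ∑ i₁, ∑ i₂, ∑ i₃, ∑ i₄, F i₁ i₂ i₃ i₄ * x₁ i₁ * x₂ i₂ * x₃ i₃ * x₄ i₄

theorem quadForm_smul (F : ι₁ → ι₂ → ι₃ → ι₄ → ℝ) (a b c d : ℝ) (x₁ : ι₁ → ℝ) (x₂ : ι₂ → ℝ)
    (x₃ : ι₃ → ℝ) (x₄ : ι₄ → ℝ) :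
    quadForm F (a • x₁) (b • x₂) (c • x₃) (d • x₄) = a * b * c * d * quadForm F x₁ x₂ x₃ x₄ := by
  simp only [quadForm, Pi.smul_apply, smul_eq_mul, mul_sum]
  exact sum_congr rfl fun _ _ => sum_congr rfl fun _ _ => sum_congr rfl fun _ _ =>
    sum_congr rfl fun _ _ => by ring

-- `0⁻¹ = 0` sends `0` to `0`, so `sqrt_sum_sq_smul_l2Normalize` needs no hypothesis.
noncomputable def l2Normalize (x : ι → ℝ) : ι → ℝ := (√(∑ i, x i ^ 2))⁻¹ • x

theorem sum_sq_l2Normalize {x : ι → ℝ} (hx : √(∑ i, x i ^ 2) ≠ 0) :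
    ∑ i, l2Normalize x i ^ 2 = 1 := by
  have hs : 0 ≤ ∑ i, x i ^ 2 := sum_nonneg fun i _ => sq_nonneg (x i)
  simp only [l2Normalize, Pi.smul_apply, smul_eq_mul, mul_pow, ← mul_sum, inv_pow,
    Real.sq_sqrt hs]
  exact inv_mul_cancel₀ (by simpa [Real.sqrt_eq_zero hs] using hx)

theorem sqrt_sum_sq_smul_l2Normalize (x : ι → ℝ) : √(∑ i, x i ^ 2) • l2Normalize x = x := by
  by_cases hx : √(∑ i, x i ^ 2) = 0
  · have hs : ∑ i, x i ^ 2 = 0 :=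
      (Real.sqrt_eq_zero (sum_nonneg fun i _ => sq_nonneg (x i))).mp hx
    ext i
    have hxi := (sum_eq_zero_iff_of_nonneg fun i _ => sq_nonneg (x i)).mp hs i (mem_univ i)
    simp [hx, pow_eq_zero_iff two_ne_zero |>.mp hxi]
  · exact smul_inv_smul₀ hx x

theorem quadForm_eq_mul_quadForm_l2Normalize (F : ι₁ → ι₂ → ι₃ → ι₄ → ℝ) (x₁ : ι₁ → ℝ)
    (x₂ : ι₂ → ℝ) (x₃ : ι₃ → ℝ) (x₄ : ι₄ → ℝ) :
    quadForm F x₁ x₂ x₃ x₄ =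
      √(∑ i, x₁ i ^ 2) * √(∑ i, x₂ i ^ 2) * √(∑ i, x₃ i ^ 2) * √(∑ i, x₄ i ^ 2) *
        quadForm F (l2Normalize x₁) (l2Normalize x₂) (l2Normalize x₃) (l2Normalize x₄) := by
  rw [← quadForm_smul]
  simp only [sqrt_sum_sq_smul_l2Normalize]

theorem sqrt_mul_sqrt_le_one_of_add_eq_two {s t : ℝ} (hs : 0 ≤ s) (ht : 0 ≤ t) (h : s + t = 2) :
    √s * √t ≤ 1 := by
  have := two_mul_le_add_sq √s √t
  rw [Real.sq_sqrt hs, Real.sq_sqrt ht] at this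
  linarith

theorem sqrt_sum_sq_mul_le_one {x₁ : ι₁ → ℝ} {x₂ : ι₂ → ℝ} {x₃ : ι₃ → ℝ} {x₄ : ι₄ → ℝ}
    (h₁₃ : ∑ i, x₁ i ^ 2 + ∑ i, x₃ i ^ 2 = 2) (h₂₄ : ∑ i, x₂ i ^ 2 + ∑ i, x₄ i ^ 2 = 2) :
    √(∑ i, x₁ i ^ 2) * √(∑ i, x₂ i ^ 2) * √(∑ i, x₃ i ^ 2) * √(∑ i, x₄ i ^ 2) ≤ 1 := by
  have h₁₃' := sqrt_mul_sqrt_le_one_of_add_eq_two (by positivity) (by positivity) h₁₃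
  have h₂₄' := sqrt_mul_sqrt_le_one_of_add_eq_two (by positivity) (by positivity) h₂₄
  calc _ = (√(∑ i, x₁ i ^ 2) * √(∑ i, x₃ i ^ 2)) * (√(∑ i, x₂ i ^ 2) * √(∑ i, x₄ i ^ 2)) := by
        ring
    _ ≤ 1 := mul_le_one₀ h₁₃' (by positivity) h₂₄'

end

/-- For a quadrilinear form with positive optimal value, maximization over the four unit
spheres `‖xⁱ‖ = 1` equals maximization over the relaxed constraints
`‖x¹‖² + ‖x³‖² = 2` and `‖x²‖² + ‖x⁴‖² = 2`. -/
theorem stmt14 {n1 n2 n3 n4 : ℕ} (F : Fin n1 → Fin n2 → Fin n3 → Fin n4 → ℝ) (v : ℝ)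
    (hv : IsGreatest {t | ∃ (x1 : Fin n1 → ℝ) (x2 : Fin n2 → ℝ)
        (x3 : Fin n3 → ℝ) (x4 : Fin n4 → ℝ),
        (∑ i, x1 i ^ 2) + (∑ i, x3 i ^ 2) = 2 ∧ (∑ i, x2 i ^ 2) + (∑ i, x4 i ^ 2) = 2 ∧
        t = ∑ i1, ∑ i2, ∑ i3, ∑ i4, F i1 i2 i3 i4 * x1 i1 * x2 i2 * x3 i3 * x4 i4} v)
    (hpos : 0 < v) :
    IsGreatest {t | ∃ (x1 : Fin n1 → ℝ) (x2 : Fin n2 → ℝ)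
        (x3 : Fin n3 → ℝ) (x4 : Fin n4 → ℝ),
        ∑ i, x1 i ^ 2 = 1 ∧ ∑ i, x2 i ^ 2 = 1 ∧ ∑ i, x3 i ^ 2 = 1 ∧ ∑ i, x4 i ^ 2 = 1 ∧
        t = ∑ i1, ∑ i2, ∑ i3, ∑ i4, F i1 i2 i3 i4 * x1 i1 * x2 i2 * x3 i3 * x4 i4} v := by
  obtain ⟨⟨x₁, x₂, x₃, x₄, h₁₃, h₂₄, rfl⟩, hmax⟩ := hv
  refine ⟨?_, fun t ⟨y₁, y₂, y₃, y₄, h₁, h₂, h₃, h₄, ht⟩ =>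
    hmax ⟨y₁, y₂, y₃, y₄, by rw [h₁, h₃]; norm_num, by rw [h₂, h₄]; norm_num, ht⟩⟩
  set r₁ := √(∑ i, x₁ i ^ 2)
  set r₂ := √(∑ i, x₂ i ^ 2)
  set r₃ := √(∑ i, x₃ i ^ 2)
  set r₄ := √(∑ i, x₄ i ^ 2)
  set u := quadForm F (l2Normalize x₁) (l2Normalize x₂) (l2Normalize x₃) (l2Normalize x₄)
  have hsplit : quadForm F x₁ x₂ x₃ x₄ = r₁ * r₂ * r₃ * r₄ * u :=
    quadForm_eq_mul_quadForm_l2Normalize F x₁ x₂ x₃ x₄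
  have hr_le : r₁ * r₂ * r₃ * r₄ ≤ 1 := sqrt_sum_sq_mul_le_one h₁₃ h₂₄
  have hQ : 0 < r₁ * r₂ * r₃ * r₄ * u := hsplit ▸ hpos
  have hu_pos := pos_of_mul_pos_right hQ (by positivity)
  obtain ⟨⟨⟨h₁, h₂⟩, h₃⟩, h₄⟩ : ((r₁ ≠ 0 ∧ r₂ ≠ 0) ∧ r₃ ≠ 0) ∧ r₄ ≠ 0 := by
    simpa only [mul_ne_zero_iff] using (pos_of_mul_pos_left hQ hu_pos.le).ne'
  have hu_le : u ≤ quadForm F x₁ x₂ x₃ x₄ :=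
    hmax ⟨_, _, _, _, by rw [sum_sq_l2Normalize h₁, sum_sq_l2Normalize h₃]; norm_num,
      by rw [sum_sq_l2Normalize h₂, sum_sq_l2Normalize h₄]; norm_num, rfl⟩
  have hu_ge : quadForm F x₁ x₂ x₃ x₄ ≤ u := hsplit ▸ mul_le_of_le_one_left hu_pos.le hr_le
  exact ⟨_, _, _, _, sum_sq_l2Normalize h₁, sum_sq_l2Normalize h₂, sum_sq_l2Normalize h₃,
    sum_sq_l2Normalize h₄, (le_antisymm hu_le hu_ge).symm⟩
end
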